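/- arXiv:math/0401006 — 5 statements merged into one kernel-verified Lean document; each statement's English description precedes it below -/
import Mathlib

section
/- Let 𝒜 be a central, essential arrangement of hyperplanes in ℝ^d, let v ∈ ℝ^d be nonzero, and let H_v be the affine hyperplane through v normal to v. Suppose H_v is generic with respect to 𝒜 (meaning H_v meets every 1-dimensional subspace in the intersection lattice of 𝒜). Then for any region R (a connected component of the complement of the union of 𝒜), the set R ∩ H_v is nonempty and bounded if and only if ⟨v, x⟩ > 0 for all x ∈ R. -/
/-!
Orient every hyperplane `W` by a normal `e W` with `⟪e W, x₀⟫ > 0`; the region `R` is then the open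
polyhedral cone `{x | ∀ W, 0 < ⟪e W, x⟫}`.

If the slice `R ∩ H_v` is nonempty and bounded, `v` cannot vanish at a point of `R`, since the ray in
that direction through a point of the slice would stay in the slice; as `R` is a convex cone, `v` is
then positive on `R`.

Conversely, if `v > 0` on `R`, then `v ≥ 0` on the closed cone `R̄`, and genericity upgrades this to
`v > 0` on `R̄ \ {0}`. Take `u ≠ 0` in `R̄` with `⟪v, u⟫ = 0`. Since `u` lies in the relative interior
of its face, `v` vanishes on the flat `X` cut out by the walls through `u`. If `X = ℝ u`, then `X` is a
line missed by `H_v`. Otherwise we move `u` inside `X ∩ v^⊥` until it meets a new wall, which makes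
`X` smaller. Finally, compactness of the unit sphere of `R̄` bounds `‖x‖` by a multiple of `⟪v, x⟫`
on `R̄`, so the slice is bounded.
-/

open scoped RealInnerProductSpace

open Bornology Filter Topology Set

section Chamber

variable {E ι : Type*} [NormedAddCommGroup E] [InnerProductSpace ℝ E]

def chamber (s : Finset ι) (e : ι → E) : ConvexCone ℝ E where
  carrier := {x | ∀ i ∈ s, 0 < ⟪e i, x⟫}
  smul_mem' c hc x hx i hi := by rw [real_inner_smul_right]; exact mul_pos hc (hx i hi)
  add_mem' x hx y hy i hi := by rw [inner_add_right]; exact add_pos (hx i hi) (hy i hi)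

def closedChamber (s : Finset ι) (e : ι → E) : ConvexCone ℝ E where
  carrier := {x | ∀ i ∈ s, 0 ≤ ⟪e i, x⟫}
  smul_mem' c hc x hx i hi := by rw [real_inner_smul_right]; exact mul_nonneg hc.le (hx i hi)
  add_mem' x hx y hy i hi := by rw [inner_add_right]; exact add_nonneg (hx i hi) (hy i hi)

variable {s : Finset ι} {e : ι → E}

theorem chamber_le_closedChamber : chamber s e ≤ closedChamber s e :=
  fun _ hx i hi => (hx i hi).le

theorem zero_notMem_chamber (hs : s.Nonempty) : (0 : E) ∉ chamber s e := by
  obtain ⟨i, hi⟩ := hs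
  intro h
  simpa using h i hi

theorem isClosed_closedChamber : IsClosed (closedChamber s e : Set E) := by
  simp only [closedChamber, ConvexCone.coe_mk, ofPred_forall]
  exact isClosed_biInter fun i _ => isClosed_le continuous_const (by fun_prop)

theorem connectedComponentIn_eq_chamber {x₀ : E} (hx₀ : x₀ ∈ chamber s e) :
    connectedComponentIn {x | ∀ i ∈ s, ⟪e i, x⟫ ≠ 0} x₀ = chamber s e := by
  have hx₀' : x₀ ∈ {x | ∀ i ∈ s, ⟪e i, x⟫ ≠ 0} := fun i hi => (hx₀ i hi).ne'
  refine Subset.antisymm (fun x hx i hi => ?_) <|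
    (chamber s e).convex.isPreconnected.subset_connectedComponentIn hx₀
      fun x hx i hi => (hx i hi).ne'
  by_contra! hxi
  obtain ⟨z, hz, hzi⟩ := isPreconnected_connectedComponentIn.intermediate_value hx
    (mem_connectedComponentIn hx₀') (f := fun y => ⟪e i, y⟫) (by fun_prop) ⟨hxi, (hx₀ i hi).le⟩
  exact connectedComponentIn_subset _ _ hz i hi hzi

theorem inner_nonneg_of_mem_closedChamber {x₀ v y : E} (hx₀ : x₀ ∈ chamber s e)
    (hv : ∀ x ∈ chamber s e, 0 < ⟪v, x⟫) (hy : y ∈ closedChamber s e) : 0 ≤ ⟪v, y⟫ := by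
  have hlim : Tendsto (fun t : ℝ => ⟪v, y + t • x₀⟫) (𝓝[>] 0) (𝓝 ⟪v, y⟫) := by
    have : Continuous fun t : ℝ => ⟪v, y + t • x₀⟫ := by fun_prop
    simpa using (this.tendsto 0).mono_left nhdsWithin_le_nhds
  refine ge_of_tendsto hlim (eventually_nhdsWithin_of_forall fun t ht => (hv _ fun i hi => ?_).le)
  rw [inner_add_right, real_inner_smul_right]
  exact add_pos_of_nonneg_of_pos (hy i hi) (mul_pos ht (hx₀ i hi))

end Chamber

section Slice

variable {E : Type*} [NormedAddCommGroup E] [InnerProductSpace ℝ E]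

theorem ConvexCone.inner_pos_of_isBounded_inter (C : ConvexCone ℝ E) (hC : (0 : E) ∉ C)
    {v : E} {c : ℝ} (hc : 0 < c) (hne : ((C : Set E) ∩ {x | ⟪v, x⟫ = c}).Nonempty)
    (hb : IsBounded ((C : Set E) ∩ {x | ⟪v, x⟫ = c})) : ∀ x ∈ C, 0 < ⟪v, x⟫ := by
  obtain ⟨y, hyC, hyv : ⟪v, y⟫ = c⟩ := hne
  obtain ⟨M, hM⟩ := isBounded_iff_forall_norm_le.1 hb
  have hne_zero : ∀ z ∈ C, ⟪v, z⟫ ≠ 0 := by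
    intro z hz hvz
    have hz0 : 0 < ‖z‖ := norm_pos_iff.2 fun h => hC (h ▸ hz)
    have hray : ∀ t : ℝ, 0 < t → t * ‖z‖ ≤ M + ‖y‖ := fun t ht => calc
      t * ‖z‖ = ‖(y + t • z) - y‖ := by simp [norm_smul, abs_of_pos ht]
      _ ≤ ‖y + t • z‖ + ‖y‖ := norm_sub_le _ _
      _ ≤ M + ‖y‖ := by
        gcongr
        refine hM _ ⟨C.add_mem hyC (C.smul_mem ht hz), ?_⟩
        simp only [mem_ofPred_eq, inner_add_right, real_inner_smul_right, hvz, mul_zero,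
          add_zero, hyv]
    have hM0 : 0 ≤ M + ‖y‖ := by linarith [hM y ⟨hyC, hyv⟩, norm_nonneg y]
    have := hray ((M + ‖y‖ + 1) / ‖z‖) (by positivity)
    rw [div_mul_cancel₀ _ hz0.ne'] at this
    linarith
  intro x hx
  refine (hne_zero x hx).lt_or_gt.resolve_left fun hxv => hne_zero (c • x + (-⟪v, x⟫) • y)
    (C.add_mem (C.smul_mem hc hx) (C.smul_mem (neg_pos.2 hxv) hyC)) ?_
  simp only [inner_add_right, real_inner_smul_right, hyv]
  ring

theorem ConvexCone.exists_pos_mul_norm_le_inner [ProperSpace E] (K : ConvexCone ℝ E)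
    (hK : IsClosed (K : Set E)) {v : E} (hv : ∀ x ∈ K, x ≠ 0 → 0 < ⟪v, x⟫) :
    ∃ m > 0, ∀ x ∈ K, m * ‖x‖ ≤ ⟪v, x⟫ := by
  obtain ⟨m, hm, hmS⟩ := ((isCompact_sphere (0 : E) 1).inter_right hK).exists_forall_le'
    (f := fun x => ⟪v, x⟫) (by fun_prop) fun x hx =>
      hv x hx.2 (ne_zero_of_mem_unit_sphere ⟨x, hx.1⟩)
  refine ⟨m, hm, fun x hx => ?_⟩
  rcases eq_or_ne x 0 with rfl | hx0
  · simp
  have hx0' : 0 < ‖x‖ := norm_pos_iff.2 hx0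
  have := hmS (‖x‖⁻¹ • x) ⟨by simp [norm_smul, hx0'.ne'], K.smul_mem (inv_pos.2 hx0') hx⟩
  rw [real_inner_smul_right, ← div_eq_inv_mul, le_div_iff₀ hx0'] at this
  linarith

theorem ConvexCone.isBounded_inter_of_inner_pos [ProperSpace E] (K : ConvexCone ℝ E)
    (hK : IsClosed (K : Set E)) {v : E} (hv : ∀ x ∈ K, x ≠ 0 → 0 < ⟪v, x⟫) (c : ℝ) :
    IsBounded ((K : Set E) ∩ {x | ⟪v, x⟫ = c}) := by
  obtain ⟨m, hm, hmK⟩ := K.exists_pos_mul_norm_le_inner hK hv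
  refine isBounded_iff_forall_norm_le.2 ⟨c / m, fun x ⟨hxK, hxv⟩ => ?_⟩
  rw [le_div_iff₀ hm, mul_comm, ← hxv]
  exact hmK x hxK

end Slice

section Face

variable {E ι : Type*} [NormedAddCommGroup E] [InnerProductSpace ℝ E] {s : Finset ι} {e : ι → E}

/-- For `u` in the closed chamber, this is the span of the smallest face containing `u`. -/
noncomputable def flatThrough (s : Finset ι) (e : ι → E) (u : E) : Submodule ℝ E :=
  ⨅ i ∈ s.filter fun i => ⟪e i, u⟫ = 0, (ℝ ∙ e i)ᗮ

theorem mem_flatThrough {u w : E} :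
    w ∈ flatThrough s e u ↔ ∀ i ∈ s, ⟪e i, u⟫ = 0 → ⟪e i, w⟫ = 0 := by
  simp [flatThrough, Submodule.mem_iInf, Submodule.mem_orthogonal_singleton_iff_inner_right]

theorem mem_flatThrough_self (u : E) : u ∈ flatThrough s e u :=
  mem_flatThrough.2 fun _ _ h => h

theorem flatThrough_add_smul_lt {u w : E} {τ : ℝ} {j : ι} (hw : w ∈ flatThrough s e u)
    (hj : j ∈ s) (hjw : ⟪e j, w⟫ ≠ 0) (hju : ⟪e j, u + τ • w⟫ = 0) :
    flatThrough s e (u + τ • w) < flatThrough s e u := by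
  refine lt_of_le_of_ne
    (fun x hx => mem_flatThrough.2 fun i hi hiu => mem_flatThrough.1 hx i hi ?_) fun h => ?_
  · rw [inner_add_right, real_inner_smul_right, hiu, mem_flatThrough.1 hw i hi hiu, mul_zero,
      add_zero]
  · exact hjw (mem_flatThrough.1 (h ▸ hw) j hj hju)

theorem eventually_add_smul_mem_closedChamber {u w : E} (hu : u ∈ closedChamber s e)
    (hw : w ∈ flatThrough s e u) : ∀ᶠ τ in 𝓝 (0 : ℝ), u + τ • w ∈ closedChamber s e := by
  show ∀ᶠ τ in 𝓝 (0 : ℝ), ∀ i ∈ s, 0 ≤ ⟪e i, u + τ • w⟫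
  refine (eventually_all_finset s).2 fun i hi => ?_
  rcases (hu i hi).eq_or_lt with hui | hui
  · refine Eventually.of_forall fun τ => ?_
    rw [inner_add_right, real_inner_smul_right, ← hui, mem_flatThrough.1 hw i hi hui.symm]
    simp
  · have : Tendsto (fun τ : ℝ => ⟪e i, u + τ • w⟫) (𝓝 0) (𝓝 ⟪e i, u⟫) := by
      simpa using ((by fun_prop : Continuous fun τ : ℝ => ⟪e i, u + τ • w⟫).tendsto 0)
    exact (this.eventually_const_lt hui).mono fun _ h => h.le

theorem inner_eq_zero_of_mem_flatThrough {u v w : E} (hv : ∀ x ∈ closedChamber s e, 0 ≤ ⟪v, x⟫)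
    (hu : u ∈ closedChamber s e) (huv : ⟪v, u⟫ = 0) (hw : w ∈ flatThrough s e u) :
    ⟪v, w⟫ = 0 := by
  obtain ⟨ε, hε, hball⟩ :=
    Metric.eventually_nhds_iff.1 (eventually_add_smul_mem_closedChamber hu hw)
  have key : ∀ τ : ℝ, |τ| < ε → 0 ≤ τ * ⟪v, w⟫ := fun τ hτ => by
    simpa [inner_add_right, real_inner_smul_right, huv] using hv _ (hball (by simpa using hτ))
  have h1 := key (ε / 2) (by rw [abs_of_pos (by positivity)]; linarith)
  have h2 := key (-(ε / 2)) (by rw [abs_neg, abs_of_pos (by positivity)]; linarith)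
  nlinarith

theorem exists_add_smul_mem_closedChamber_inner_eq_zero {u w : E} (hu : u ∈ closedChamber s e)
    {i : ι} (hi : i ∈ s) (hiw : ⟪e i, w⟫ < 0) :
    ∃ τ : ℝ, ∃ j ∈ s, ⟪e j, w⟫ < 0 ∧ ⟪e j, u + τ • w⟫ = 0 ∧ u + τ • w ∈ closedChamber s e := by
  classical
  obtain ⟨j, hj, hmin⟩ := (s.filter fun j => ⟪e j, w⟫ < 0).exists_min_image
    (fun j => ⟪e j, u⟫ / -⟪e j, w⟫) ⟨i, Finset.mem_filter.2 ⟨hi, hiw⟩⟩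
  obtain ⟨hjs, hjw⟩ := Finset.mem_filter.1 hj
  refine ⟨⟪e j, u⟫ / -⟪e j, w⟫, j, hjs, hjw, ?_, fun k hk => ?_⟩
  · rw [inner_add_right, real_inner_smul_right, div_neg, neg_mul, div_mul_cancel₀ _ hjw.ne,
      add_neg_cancel]
  rw [inner_add_right, real_inner_smul_right]
  rcases lt_or_ge ⟪e k, w⟫ 0 with hkw | hkw
  · have := (le_div_iff₀ (neg_pos.2 hkw)).1 (hmin k (Finset.mem_filter.2 ⟨hk, hkw⟩))
    linarith
  · exact add_nonneg (hu k hk) (mul_nonneg (div_nonneg (hu j hjs) (neg_nonneg.2 hjw.le)) hkw)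

theorem eq_zero_of_mem_closedChamber_of_inner_eq_zero [FiniteDimensional ℝ E] {v u : E}
    (hess : ∀ x : E, (∀ i ∈ s, ⟪e i, x⟫ = 0) → x = 0)
    (hgen : ∀ t ⊆ s, Module.finrank ℝ (⨅ i ∈ t, (ℝ ∙ e i)ᗮ : Submodule ℝ E) = 1 →
      ∃ x ∈ (⨅ i ∈ t, (ℝ ∙ e i)ᗮ : Submodule ℝ E), ⟪v, x⟫ ≠ 0)
    (hv : ∀ x ∈ closedChamber s e, 0 ≤ ⟪v, x⟫) (hu : u ∈ closedChamber s e)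
    (huv : ⟪v, u⟫ = 0) : u = 0 := by
  classical
  induction hn : Module.finrank ℝ (flatThrough s e u) using Nat.strong_induction_on
    generalizing u with
  | _ n ih =>
  by_contra hu0
  obtain ⟨w, hwu, hw⟩ : ∃ w ∈ flatThrough s e u, w ∉ ℝ ∙ u := by
    by_contra! hflat
    have heq : flatThrough s e u = ℝ ∙ u :=
      le_antisymm hflat ((Submodule.span_singleton_le_iff_mem _ _).2 (mem_flatThrough_self u))
    obtain ⟨x, hx, hvx⟩ := hgen _ (Finset.filter_subset _ s)
      (heq ▸ finrank_span_singleton hu0 : Module.finrank ℝ (flatThrough s e u) = 1)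
    obtain ⟨c, rfl⟩ := Submodule.mem_span_singleton.1 (heq ▸ hx : x ∈ ℝ ∙ u)
    exact hvx (by rw [real_inner_smul_right, huv, mul_zero])
  have hvw := inner_eq_zero_of_mem_flatThrough hv hu huv hwu
  obtain ⟨i, hi, hiw⟩ : ∃ i ∈ s, ⟪e i, w⟫ ≠ 0 := by
    by_contra! h
    exact hw (hess w h ▸ Submodule.zero_mem _)
  wlog hneg : ⟪e i, w⟫ < 0 generalizing w
  · refine this (-w) (neg_mem hwu) (fun h => hw (by simpa using neg_mem h)) (by simp [hvw])
      (by simpa using hiw) ?_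
    rw [inner_neg_right, neg_neg_iff_pos]
    exact lt_of_le_of_ne (not_lt.1 hneg) hiw.symm
  obtain ⟨τ, j, hj, hjw, hju, hu'⟩ := exists_add_smul_mem_closedChamber_inner_eq_zero hu hi hneg
  have hu'0 : u + τ • w = 0 :=
    ih _ (hn ▸ Submodule.finrank_lt_finrank_of_lt (flatThrough_add_smul_lt hwu hj hjw.ne hju))
      hu' (by rw [inner_add_right, real_inner_smul_right, huv, hvw, mul_zero, add_zero]) rfl
  rcases eq_or_ne τ 0 with rfl | hτ
  · exact hu0 (by simpa using hu'0)
  · refine hw (Submodule.mem_span_singleton.2 ⟨-τ⁻¹, ?_⟩)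
    rw [eq_neg_of_add_eq_zero_left hu'0, smul_neg, neg_smul, neg_neg, smul_smul,
      inv_mul_cancel₀ hτ, one_smul]

theorem chamber_inter_nonempty_and_isBounded_iff [FiniteDimensional ℝ E] (hs : s.Nonempty)
    {v : E} (hess : ∀ x : E, (∀ i ∈ s, ⟪e i, x⟫ = 0) → x = 0)
    (hgen : ∀ t ⊆ s, Module.finrank ℝ (⨅ i ∈ t, (ℝ ∙ e i)ᗮ : Submodule ℝ E) = 1 →
      ∃ x ∈ (⨅ i ∈ t, (ℝ ∙ e i)ᗮ : Submodule ℝ E), ⟪v, x⟫ ≠ 0)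
    {x₀ : E} (hx₀ : x₀ ∈ chamber s e) {c : ℝ} (hc : 0 < c) :
    (((chamber s e : Set E) ∩ {x | ⟪v, x⟫ = c}).Nonempty ∧
        IsBounded ((chamber s e : Set E) ∩ {x | ⟪v, x⟫ = c})) ↔
      ∀ x ∈ chamber s e, 0 < ⟪v, x⟫ := by
  refine ⟨fun ⟨hne, hb⟩ => (chamber s e).inner_pos_of_isBounded_inter (zero_notMem_chamber hs)
    hc hne hb, fun hpos => ⟨?_, ?_⟩⟩
  · refine ⟨(c / ⟪v, x₀⟫) • x₀, (chamber s e).smul_mem (div_pos hc (hpos x₀ hx₀)) hx₀, ?_⟩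
    show ⟪v, _⟫ = _
    rw [real_inner_smul_right, div_mul_cancel₀ _ (hpos x₀ hx₀).ne']
  · have hnonneg := fun y => inner_nonneg_of_mem_closedChamber (y := y) hx₀ hpos
    refine ((closedChamber s e).isBounded_inter_of_inner_pos isClosed_closedChamber
      (fun x hx hx0 => (hnonneg x hx).lt_of_ne' fun hvx => hx0 ?_) c).subset
      (inter_subset_inter_left _ chamber_le_closedChamber)
    exact eq_zero_of_mem_closedChamber_of_inner_eq_zero hess hgen hnonneg hx hvx

end Face

theorem Submodule.exists_orthogonal_span_singleton_eq_of_notMem {E : Type*}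
    [NormedAddCommGroup E] [InnerProductSpace ℝ E] [FiniteDimensional ℝ E] {W : Submodule ℝ E}
    (hW : Module.finrank ℝ Wᗮ = 1) {x : E} (hx : x ∉ W) :
    ∃ n : E, (ℝ ∙ n)ᗮ = W ∧ 0 < ⟪n, x⟫ := by
  obtain ⟨n, hn, hn0⟩ := Submodule.exists_mem_ne_zero_of_ne_bot
    (p := Wᗮ) <| by rw [ne_eq, ← Submodule.finrank_eq_zero]; omega
  have hWn : (ℝ ∙ n)ᗮ = W := by
    rw [← eq_span_singleton_of_mem_of_finrank_eq_one hW hn hn0, Submodule.orthogonal_orthogonal]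
  have hnx : ⟪n, x⟫ ≠ 0 :=
    fun h => hx (hWn ▸ Submodule.mem_orthogonal_singleton_iff_inner_right.2 h)
  refine ⟨⟪n, x⟫ • n, ?_, ?_⟩
  · rwa [Submodule.span_singleton_smul_eq (IsUnit.mk0 _ hnx)]
  · rw [real_inner_smul_left]
    exact mul_self_pos.2 hnx

theorem Submodule.finrank_orthogonal_eq_one {E : Type*} [NormedAddCommGroup E]
    [InnerProductSpace ℝ E] [FiniteDimensional ℝ E] {W : Submodule ℝ E}
    (hW : Module.finrank ℝ W = Module.finrank ℝ E - 1) (hW' : W ≠ ⊤) :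
    Module.finrank ℝ Wᗮ = 1 := by
  have := W.finrank_add_finrank_orthogonal
  have := Submodule.finrank_lt hW'
  omega

/-- Let `𝒜` be a central, essential arrangement of (linear) hyperplanes in `ℝ^d`,
`v ≠ 0`, and let `H_v = {x : ⟪v,x⟫ = ⟪v,v⟫}` be the affine hyperplane through `v`
normal to `v`.  Assume `H_v` is generic with respect to `𝒜`, i.e. it meets every
`1`-dimensional intersection of hyperplanes of `𝒜`.  Then for any region `R`
(a connected component of the complement of `⋃𝒜`), the slice `R ∩ H_v` is
nonempty and bounded if and only if `⟪v, x⟫ > 0` for all `x ∈ R`. -/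
theorem region_slice_bounded_iff_pos {d : ℕ}
    (𝒜 : Finset (Submodule ℝ (EuclideanSpace ℝ (Fin d))))
    (hhyp : ∀ W ∈ 𝒜, Module.finrank ℝ W = d - 1 ∧ W ≠ ⊤)
    (hess : (⨅ W ∈ 𝒜, W : Submodule ℝ (EuclideanSpace ℝ (Fin d))) = ⊥)
    (v : EuclideanSpace ℝ (Fin d)) (hv : v ≠ 0)
    (hgen : ∀ s ⊆ 𝒜, Module.finrank ℝ (⨅ W ∈ s, W : Submodule ℝ (EuclideanSpace ℝ (Fin d))) = 1 →
      ({x | ⟪v, x⟫ = ⟪v, v⟫} ∩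
        ((⨅ W ∈ s, W : Submodule ℝ (EuclideanSpace ℝ (Fin d))) : Set _)).Nonempty)
    (x₀ : EuclideanSpace ℝ (Fin d)) (hx₀ : ∀ W ∈ 𝒜, x₀ ∉ W)
    (R : Set (EuclideanSpace ℝ (Fin d)))
    (hR : R = connectedComponentIn {x | ∀ W ∈ 𝒜, x ∉ W} x₀) :
    ((R ∩ {x | ⟪v, x⟫ = ⟪v, v⟫}).Nonempty ∧
        Bornology.IsBounded (R ∩ {x | ⟪v, x⟫ = ⟪v, v⟫})) ↔
      ∀ x ∈ R, 0 < ⟪v, x⟫ := by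
  have hvv : 0 < ⟪v, v⟫ := real_inner_self_pos.2 hv
  choose! e he hx₀e using fun W hW => Submodule.exists_orthogonal_span_singleton_eq_of_notMem
    (Submodule.finrank_orthogonal_eq_one (by rw [(hhyp W hW).1, finrank_euclideanSpace_fin])
      (hhyp W hW).2) (hx₀ W hW)
  have hwall : ∀ W ∈ 𝒜, ∀ x, x ∈ W ↔ ⟪e W, x⟫ = 0 := fun W hW x => by
    rw [← Submodule.mem_orthogonal_singleton_iff_inner_right, he W hW]
  have hess' : ∀ x, (∀ W ∈ 𝒜, ⟪e W, x⟫ = 0) → x = 0 := fun x hx => by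
    have : x ∈ (⨅ W ∈ 𝒜, W : Submodule ℝ _) := by
      simpa only [Submodule.mem_iInf] using fun W hW => (hwall W hW x).2 (hx W hW)
    rwa [hess, Submodule.mem_bot] at this
  have hgen' : ∀ t ⊆ 𝒜, Module.finrank ℝ (⨅ W ∈ t, (ℝ ∙ e W)ᗮ : Submodule ℝ _) = 1 →
      ∃ x ∈ (⨅ W ∈ t, (ℝ ∙ e W)ᗮ : Submodule ℝ _), ⟪v, x⟫ ≠ 0 := fun t ht h => by
    rw [iInf_congr fun W => iInf_congr fun hW => he W (ht hW)] at h ⊢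
    obtain ⟨x, hxv, hx⟩ := hgen t ht h
    exact ⟨x, hx, hxv ▸ hvv.ne'⟩
  have hR' : R = chamber 𝒜 e := by
    rw [hR, ← connectedComponentIn_eq_chamber hx₀e]
    exact congrArg (connectedComponentIn · x₀)
      (Set.ext fun x => forall₂_congr fun W hW => (hwall W hW x).not)
  have h𝒜 : 𝒜.Nonempty := Finset.nonempty_iff_ne_empty.2 fun h => hv (hess' v (by simp [h]))
  subst hR'
  exact chamber_inter_nonempty_and_isBounded_iff h𝒜 hess' hgen' hx₀e hvv
end

section
/- Let v = (1,2,4,…,2^{n-1}) ∈ ℝ^n. For a signed permutation (ω,ε) of [n] (ω a permutation of [n], ε ∈ {−1,1}^n), let R_{ω,ε} = {x ∈ ℝ^n : 0 < ε₁x_{ω(1)} < ε₂x_{ω(2)} < ⋯ < εₙx_{ω(n)}}. Then ⟨v, x⟩ > 0 for all x ∈ R_{ω,ε} if and only if every right-to-left maximum of ω is unbarred, i.e., for every index i such that ω(i) > ω(j) for all j > i, one has ε_i = 1. -/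
open Finset

lemma aux_sum_two_pow_le {α : Type*} [DecidableEq α] (s : Finset α) (f : α → ℕ)
    (hf : Set.InjOn f s) (v : ℕ) (hv : ∀ a ∈ s, f a < v) :
    ∑ a ∈ s, (2:ℝ) ^ f a ≤ 2 ^ v - 1 := by
  have h1 : ∑ a ∈ s, (2:ℝ) ^ f a = ∑ t ∈ s.image f, (2:ℝ) ^ t :=
    (Finset.sum_image (fun a ha b hb h => hf ha hb h)).symm
  have h2 : s.image f ⊆ Finset.range v := by
    intro t ht
    obtain ⟨a, ha, rfl⟩ := Finset.mem_image.mp ht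
    exact Finset.mem_range.mpr (hv a ha)
  have h3 : ∑ t ∈ Finset.range v, (2:ℝ)^t = 2^v - 1 := by
    rw [geom_sum_eq (by norm_num)]; norm_num
  calc ∑ a ∈ s, (2:ℝ) ^ f a = ∑ t ∈ s.image f, (2:ℝ) ^ t := h1
    _ ≤ ∑ t ∈ Finset.range v, (2:ℝ)^t :=
        Finset.sum_le_sum_of_subset_of_nonneg h2 (fun t _ _ => by positivity)
    _ = 2^v - 1 := h3

/-- If every right-to-left maximum is unbarred, each tail sum of `ε j * 2^(ω j)` is ≥ 1. -/
lemma aux_tail_pos {n : ℕ} (ω : Equiv.Perm (Fin n)) (ε : Fin n → ℝ)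
    (hε : ∀ i, ε i = 1 ∨ ε i = -1)
    (H : ∀ i : Fin n, (∀ j : Fin n, i < j → ω j < ω i) → ε i = 1)
    (k : ℕ) (hk : k < n) :
    1 ≤ ∑ j ∈ univ.filter (fun j : Fin n => k ≤ j.val), ε j * (2:ℝ) ^ ((ω j : ℕ)) := by
  set F := univ.filter (fun j : Fin n => k ≤ j.val) with hF
  have hne : F.Nonempty := ⟨⟨k, hk⟩, by simp [hF]⟩
  obtain ⟨m, hmF, hmax⟩ := Finset.exists_max_image F (fun j => (ω j : ℕ)) hne
  have hkm : k ≤ m.val := by simpa [hF] using hmF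
  have hrtl : ∀ j : Fin n, m < j → ω j < ω m := by
    intro j hj
    have hjF : j ∈ F := by
      simp only [hF, mem_filter, mem_univ, true_and]
      exact le_trans hkm (le_of_lt hj)
    have hle : (ω j : ℕ) ≤ (ω m : ℕ) := hmax j hjF
    have hne' : ω j ≠ ω m := fun h => (ne_of_gt hj) (ω.injective h)
    exact lt_of_le_of_ne hle (fun h => hne' (Fin.val_injective h) ) |>.trans_le le_rfl
  have hεm : ε m = 1 := H m hrtl
  have hsplit : ∑ j ∈ F.erase m, ε j * (2:ℝ)^((ω j : ℕ)) + ε m * 2^((ω m : ℕ))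
      = ∑ j ∈ F, ε j * (2:ℝ)^((ω j : ℕ)) := Finset.sum_erase_add F _ hmF
  have hbound : ∑ j ∈ F.erase m, (2:ℝ)^((ω j : ℕ)) ≤ 2^((ω m : ℕ)) - 1 := by
    apply aux_sum_two_pow_le
    · intro a ha b hb h
      exact ω.injective (Fin.val_injective h)
    · intro a ha
      have haF : a ∈ F := Finset.mem_of_mem_erase ha
      have hane : a ≠ m := Finset.ne_of_mem_erase ha
      exact lt_of_le_of_ne (hmax a haF) (fun h => hane (ω.injective (Fin.val_injective h)))
  have hterm : ∀ j ∈ F.erase m, -(2:ℝ)^((ω j : ℕ)) ≤ ε j * 2^((ω j : ℕ)) := by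
    intro j _
    rcases hε j with h | h <;> rw [h] <;> nlinarith [pow_pos (by norm_num : (0:ℝ) < 2) ((ω j : ℕ))]
  have h4 : -(2^((ω m : ℕ)) - 1) ≤ ∑ j ∈ F.erase m, ε j * (2:ℝ)^((ω j : ℕ)) := by
    calc -((2:ℝ)^((ω m : ℕ)) - 1) ≤ -∑ j ∈ F.erase m, (2:ℝ)^((ω j : ℕ)) := by linarith
      _ = ∑ j ∈ F.erase m, -(2:ℝ)^((ω j : ℕ)) := by rw [Finset.sum_neg_distrib]
      _ ≤ _ := Finset.sum_le_sum hterm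
  rw [← hsplit, hεm]
  nlinarith [pow_pos (by norm_num : (0:ℝ) < 2) ((ω m : ℕ))]

/-- If `i` is a barred right-to-left maximum, the tail sum starting at `i` is ≤ -1. -/
lemma aux_tail_neg {n : ℕ} (ω : Equiv.Perm (Fin n)) (ε : Fin n → ℝ)
    (hε : ∀ i, ε i = 1 ∨ ε i = -1) (i : Fin n)
    (hi : ∀ j : Fin n, i < j → ω j < ω i) (hεi : ε i = -1) :
    ∑ j ∈ univ.filter (fun j : Fin n => i ≤ j), ε j * (2:ℝ) ^ ((ω j : ℕ)) ≤ -1 := by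
  set F := univ.filter (fun j : Fin n => i ≤ j) with hF
  have hiF : i ∈ F := by simp [hF]
  have hsplit : ∑ j ∈ F.erase i, ε j * (2:ℝ)^((ω j : ℕ)) + ε i * 2^((ω i : ℕ))
      = ∑ j ∈ F, ε j * (2:ℝ)^((ω j : ℕ)) := Finset.sum_erase_add F _ hiF
  have hbound : ∑ j ∈ F.erase i, (2:ℝ)^((ω j : ℕ)) ≤ 2^((ω i : ℕ)) - 1 := by
    apply aux_sum_two_pow_le
    · intro a _ b _ h
      exact ω.injective (Fin.val_injective h)
    · intro a ha
      have haF : a ∈ F := Finset.mem_of_mem_erase ha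
      have hane : a ≠ i := Finset.ne_of_mem_erase ha
      have hia : i ≤ a := by simpa [hF] using haF
      exact hi a (lt_of_le_of_ne hia (Ne.symm hane))
  have hterm : ∀ j ∈ F.erase i, ε j * (2:ℝ)^((ω j : ℕ)) ≤ 2^((ω j : ℕ)) := by
    intro j _
    rcases hε j with h | h <;> rw [h] <;> nlinarith [pow_pos (by norm_num : (0:ℝ) < 2) ((ω j : ℕ))]
  have h4 : ∑ j ∈ F.erase i, ε j * (2:ℝ)^((ω j : ℕ)) ≤ 2^((ω i : ℕ)) - 1 :=
    le_trans (Finset.sum_le_sum hterm) hbound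
  rw [← hsplit, hεi]
  nlinarith

lemma aux_lower {n : ℕ} (ω : Equiv.Perm (Fin n)) (ε : Fin n → ℝ)
    (hε : ∀ i, ε i = 1 ∨ ε i = -1)
    (H : ∀ i : Fin n, (∀ j : Fin n, i < j → ω j < ω i) → ε i = 1)
    (y : Fin n → ℝ) (hmono : StrictMono y) :
    ∀ m k (hk : k < n), n - k = m →
      (∑ j ∈ univ.filter (fun j : Fin n => k ≤ j.val), ε j * (2:ℝ)^((ω j:ℕ))) * y ⟨k, hk⟩
        ≤ ∑ j ∈ univ.filter (fun j : Fin n => k ≤ j.val), (ε j * (2:ℝ)^((ω j:ℕ))) * y j := by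
  intro m
  induction m with
  | zero => intro k hk hm; omega
  | succ m ih =>
    intro k hk hm
    have hins : univ.filter (fun j : Fin n => k ≤ j.val)
        = insert ⟨k, hk⟩ (univ.filter (fun j : Fin n => k + 1 ≤ j.val)) := by
      ext j
      simp only [mem_filter, mem_univ, true_and, mem_insert, Fin.ext_iff]
      omega
    have hnotmem : (⟨k, hk⟩ : Fin n) ∉ univ.filter (fun j : Fin n => k + 1 ≤ j.val) := by
      simp
    rw [hins, Finset.sum_insert hnotmem, Finset.sum_insert hnotmem]
    by_cases hkn : k + 1 < n
    · have hy : y ⟨k, hk⟩ ≤ y ⟨k + 1, hkn⟩ := le_of_lt (hmono (by simp [Fin.lt_def]))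
      have hT : 1 ≤ ∑ j ∈ univ.filter (fun j : Fin n => k + 1 ≤ j.val),
          ε j * (2:ℝ)^((ω j:ℕ)) := aux_tail_pos ω ε hε H (k+1) hkn
      have hih := ih (k+1) hkn (by omega)
      have h2 : (∑ j ∈ univ.filter (fun j : Fin n => k + 1 ≤ j.val),
            ε j * (2:ℝ)^((ω j:ℕ))) * y ⟨k, hk⟩
          ≤ (∑ j ∈ univ.filter (fun j : Fin n => k + 1 ≤ j.val),
            ε j * (2:ℝ)^((ω j:ℕ))) * y ⟨k + 1, hkn⟩ :=
        mul_le_mul_of_nonneg_left hy (by linarith)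
      nlinarith [hih]
    · have hempty : univ.filter (fun j : Fin n => k + 1 ≤ j.val) = ∅ := by
        ext j
        simp only [mem_filter, mem_univ, true_and, Finset.notMem_empty, iff_false]
        omega
      rw [hempty]
      simp

/-- Let `v = (1,2,4,…,2^{n-1}) ∈ ℝ^n` and, for a signed permutation `(ω,ε)` of `[n]`,
let `R_{ω,ε} = {x : 0 < ε₁x_{ω(1)} < ε₂x_{ω(2)} < ⋯ < εₙx_{ω(n)}}`.  Then
`⟨v,x⟩ > 0` for all `x ∈ R_{ω,ε}` iff every right-to-left maximum of `(ω,ε)` is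
unbarred, i.e. `ε i = 1` for every `i` with `ω(i) > ω(j)` for all `j > i`. -/
theorem typeB_region_dot_pos_iff_rtl_max_unbarred {n : ℕ} (hn : 1 ≤ n)
    (ω : Equiv.Perm (Fin n)) (ε : Fin n → ℝ) (hε : ∀ i, ε i = 1 ∨ ε i = -1)
    (v : Fin n → ℝ) (hv : v = fun i : Fin n => 2 ^ (i : ℕ))
    (R : Set (Fin n → ℝ))
    (hR : R = {x | 0 < ε ⟨0, by omega⟩ * x (ω ⟨0, by omega⟩) ∧
      StrictMono fun i => ε i * x (ω i)}) :
    (∀ x ∈ R, 0 < ∑ i, v i * x i) ↔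
      ∀ i : Fin n, (∀ j : Fin n, i < j → ω j < ω i) → ε i = 1 := by
  subst hv hR
  have hsq : ∀ (j : Fin n) (t : ℝ), ε j * (ε j * t) = t := by
    intro j t
    rcases hε j with h | h <;> rw [h] <;> ring
  -- rewriting the dot product
  have hdot : ∀ x : Fin n → ℝ,
      ∑ i, (fun i : Fin n => (2:ℝ) ^ (i : ℕ)) i * x i
        = ∑ j, (ε j * (2:ℝ)^((ω j:ℕ))) * (ε j * x (ω j)) := by
    intro x
    rw [← Equiv.sum_comp ω (fun i : Fin n => (2:ℝ) ^ (i : ℕ) * x i)]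
    refine Finset.sum_congr rfl fun j _ => ?_
    rcases hε j with h | h <;> rw [h] <;> ring
  constructor
  · -- forward: contrapositive
    intro hpos i hi
    by_contra hne
    have hεi : ε i = -1 := (hε i).resolve_left hne
    set B : ℝ := ∑ j : Fin n, (2:ℝ)^((ω j:ℕ)) * (((j:ℕ):ℝ) + 1) with hB
    have hB0 : 0 ≤ B := Finset.sum_nonneg fun j _ => by positivity
    set M : ℝ := B + 1 with hM
    have hM1 : 1 ≤ M := by linarith
    set y : Fin n → ℝ := fun j => ((j:ℕ):ℝ) + 1 + (if i ≤ j then M else 0) with hy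
    set x : Fin n → ℝ := fun kk => ε (ω.symm kk) * y (ω.symm kk) with hx
    have hxy : ∀ j, ε j * x (ω j) = y j := by
      intro j
      simp only [hx, Equiv.symm_apply_apply]
      exact hsq j (y j)
    have hymono : StrictMono y := by
      intro a b hab
      have h1 : ((a:ℕ):ℝ) + 1 < ((b:ℕ):ℝ) + 1 := by
        have h := Fin.lt_def.mp hab
        have h' : ((a:ℕ):ℝ) < ((b:ℕ):ℝ) := by exact_mod_cast h
        linarith
      have h2 : (if i ≤ a then M else 0) ≤ (if i ≤ b then M else 0) := by
        by_cases ha : i ≤ a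
        · rw [if_pos ha, if_pos (le_trans ha (le_of_lt hab))]
        · rw [if_neg ha]
          split <;> linarith
      simp only [hy]
      linarith
    have hxR : (0 < ε ⟨0, by omega⟩ * x (ω ⟨0, by omega⟩) ∧
        StrictMono fun j => ε j * x (ω j)) := by
      constructor
      · rw [hxy]
        simp only [hy]
        split <;> · push_cast; linarith
      · have : (fun j => ε j * x (ω j)) = y := funext hxy
        rw [this]; exact hymono
    have hlt := hpos x hxR
    rw [hdot x] at hlt
    have hsum : ∑ j, (ε j * (2:ℝ)^((ω j:ℕ))) * (ε j * x (ω j))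
        = (∑ j : Fin n, (ε j * (2:ℝ)^((ω j:ℕ))) * (((j:ℕ):ℝ) + 1))
          + (∑ j ∈ univ.filter (fun j : Fin n => i ≤ j), ε j * (2:ℝ)^((ω j:ℕ))) * M := by
      have e1 : ∀ j : Fin n, (ε j * (2:ℝ)^((ω j:ℕ))) * (ε j * x (ω j))
          = (ε j * (2:ℝ)^((ω j:ℕ))) * (((j:ℕ):ℝ)+1)
            + (if i ≤ j then (ε j * (2:ℝ)^((ω j:ℕ))) * M else 0) := by
        intro j
        rw [hxy j]
        simp only [hy]
        split <;> ring
      calc ∑ j, (ε j * (2:ℝ)^((ω j:ℕ))) * (ε j * x (ω j))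
          = ∑ j : Fin n, ((ε j * (2:ℝ)^((ω j:ℕ))) * (((j:ℕ):ℝ)+1)
            + (if i ≤ j then (ε j * (2:ℝ)^((ω j:ℕ))) * M else 0)) :=
            Finset.sum_congr rfl (fun j _ => e1 j)
        _ = (∑ j : Fin n, (ε j * (2:ℝ)^((ω j:ℕ))) * (((j:ℕ):ℝ)+1))
            + ∑ j : Fin n, (if i ≤ j then (ε j * (2:ℝ)^((ω j:ℕ))) * M else 0) :=
            Finset.sum_add_distrib
        _ = _ := by rw [← Finset.sum_filter, Finset.sum_mul]
    have hA : (∑ j : Fin n, (ε j * (2:ℝ)^((ω j:ℕ))) * (((j:ℕ):ℝ) + 1)) ≤ B := by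
      rw [hB]
      refine Finset.sum_le_sum fun j _ => ?_
      have hp : (0:ℝ) < 2^((ω j:ℕ)) := by positivity
      have hj1 : (0:ℝ) < ((j:ℕ):ℝ) + 1 := by positivity
      rcases hε j with h | h <;> rw [h] <;> nlinarith
    have hT : (∑ j ∈ univ.filter (fun j : Fin n => i ≤ j), ε j * (2:ℝ)^((ω j:ℕ))) ≤ -1 :=
      aux_tail_neg ω ε hε i hi hεi
    have hTM : (∑ j ∈ univ.filter (fun j : Fin n => i ≤ j), ε j * (2:ℝ)^((ω j:ℕ))) * M
        ≤ (-1) * M := mul_le_mul_of_nonneg_right hT (by linarith)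
    rw [hsum] at hlt
    linarith
  · -- backward
    intro H x hx
    obtain ⟨h0, hmono⟩ := hx
    rw [hdot x]
    set y : Fin n → ℝ := fun j => ε j * x (ω j) with hy
    have hymono : StrictMono y := hmono
    have h00 : 0 < y ⟨0, by omega⟩ := h0
    have hfull : univ.filter (fun j : Fin n => 0 ≤ j.val) = (univ : Finset (Fin n)) := by
      simp
    have hkey := aux_lower ω ε hε H y hymono n 0 (by omega) (by omega)
    rw [hfull] at hkey
    have hT : 1 ≤ ∑ j ∈ univ.filter (fun j : Fin n => 0 ≤ j.val),
        ε j * (2:ℝ)^((ω j:ℕ)) := aux_tail_pos ω ε hε H 0 (by omega)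
    rw [hfull] at hT
    calc (0:ℝ) < (∑ j : Fin n, ε j * (2:ℝ)^((ω j:ℕ))) * y ⟨0, by omega⟩ := by nlinarith
      _ ≤ ∑ j : Fin n, (ε j * (2:ℝ)^((ω j:ℕ))) * y j := hkey
end

section
/- The number of signed permutations (ω,ε) of [n] all of whose right-to-left maxima are unbarred equals 1·3·5⋯(2n−1) = (2n)!/(2^n n!). -/
/-!
Inserting the smallest value `0` at position `k` of a permutation of `[n]` keeps every
right-to-left maximum and creates a new one only when `k` is the last position. Hence a
signed permutation of `[n + 1]` with unbarred right-to-left maxima is the same as one of `[n]`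
together with a position `k` and a sign for the new entry, the sign being forced when `k` is
last: `2n + 1` choices.
-/

open Finset Equiv

theorem prod_range_two_mul_add_one_mul_two_pow_mul_factorial (n : ℕ) :
    (∏ k ∈ range n, (2 * k + 1)) * (2 ^ n * n.factorial) = (2 * n).factorial := by
  induction n with
  | zero => simp
  | succ n ih =>
    rw [prod_range_succ, show 2 * (n + 1) = 2 * n + 1 + 1 by ring, Nat.factorial_succ,
      Nat.factorial_succ, Nat.factorial_succ, pow_succ, ← ih]
    ring

namespace SignedPerm

variable {n : ℕ}

def IsRtlMax {α β : Type*} [LT α] [LT β] (f : α → β) (i : α) : Prop :=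
  ∀ j, i < j → f j < f i

def AllRtlMaxUnbarred (p : Perm (Fin n) × (Fin n → ℤˣ)) : Prop :=
  ∀ i, IsRtlMax p.1 i → p.2 i = 1

instance : DecidablePred (AllRtlMaxUnbarred (n := n)) := fun p =>
  inferInstanceAs (Decidable (∀ i, (∀ j, i < j → p.1 j < p.1 i) → p.2 i = 1))

/-- `insertZero k σ` puts the value `0` at position `k` and shifts the values of `σ` up by one. -/
def insertZero (k : Fin (n + 1)) (σ : Perm (Fin n)) : Perm (Fin (n + 1)) :=
  (finSuccEquiv' k).trans (σ.optionCongr.trans (finSuccEquiv n).symm)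

@[simp] lemma insertZero_self (k : Fin (n + 1)) (σ : Perm (Fin n)) : insertZero k σ k = 0 := by
  simp [insertZero, finSuccEquiv]

@[simp] lemma insertZero_succAbove (k : Fin (n + 1)) (σ : Perm (Fin n)) (i : Fin n) :
    insertZero k σ (k.succAbove i) = (σ i).succ := by
  simp [insertZero, finSuccEquiv]

lemma insertZero_injective2 : Function.Injective2 (insertZero (n := n)) := by
  intro k k' σ σ' h
  have hk : k = k' := (insertZero k' σ').injective <| by
    rw [← h, insertZero_self, h, insertZero_self]
  subst hk
  refine ⟨rfl, Equiv.ext fun i => Fin.succ_injective _ ?_⟩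
  rw [← insertZero_succAbove, ← insertZero_succAbove, h]

lemma isRtlMax_insertZero_succAbove {k : Fin (n + 1)} {σ : Perm (Fin n)} {i : Fin n} :
    IsRtlMax (insertZero k σ) (k.succAbove i) ↔ IsRtlMax σ i := by
  constructor
  · intro h j hij
    simpa using h (k.succAbove j) (Fin.succAbove_lt_succAbove_iff.mpr hij)
  · intro h j' hj'
    rcases eq_or_ne j' k with rfl | hne
    · simp
    · obtain ⟨j, rfl⟩ := Fin.exists_succAbove_eq hne
      simp [h j (Fin.succAbove_lt_succAbove_iff.mp hj')]

lemma isRtlMax_insertZero_self {k : Fin (n + 1)} {σ : Perm (Fin n)} :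
    IsRtlMax (insertZero k σ) k ↔ k = Fin.last n := by
  refine ⟨fun h => ?_, ?_⟩
  · by_contra hne
    obtain ⟨j, hj⟩ := Fin.exists_succAbove_eq (Ne.symm hne)
    have := h (Fin.last n) (Fin.lt_last_iff_ne_last.mpr hne)
    rw [← hj, insertZero_succAbove, insertZero_self] at this
    exact Fin.not_lt_zero _ this
  · rintro rfl j hj
    exact absurd hj (Fin.le_last j).not_gt

def signedInsertZero (x : (Fin (n + 1) × ℤˣ) × (Perm (Fin n) × (Fin n → ℤˣ))) :
    Perm (Fin (n + 1)) × (Fin (n + 1) → ℤˣ) :=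
  (insertZero x.1.1 x.2.1, Fin.insertNth x.1.1 x.1.2 x.2.2)

lemma signedInsertZero_bijective : Function.Bijective (signedInsertZero (n := n)) := by
  refine (Fintype.bijective_iff_injective_and_card _).mpr ⟨?_, ?_⟩
  · rintro ⟨⟨k, s⟩, σ, ε⟩ ⟨⟨k', s'⟩, σ', ε'⟩ h
    simp only [signedInsertZero, Prod.mk.injEq] at h
    obtain ⟨rfl, rfl⟩ := insertZero_injective2 h.1
    obtain ⟨rfl, rfl⟩ := Fin.insertNth_injective2 h.2
    rfl
  · simp only [Fintype.card_prod, Fintype.card_fin, Fintype.card_units_int, Fintype.card_perm,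
      Fintype.card_pi, prod_const, card_univ, Nat.factorial_succ]
    ring

lemma allRtlMaxUnbarred_signedInsertZero {k : Fin (n + 1)} {s : ℤˣ}
    {p : Perm (Fin n) × (Fin n → ℤˣ)} :
    AllRtlMaxUnbarred (signedInsertZero ((k, s), p)) ↔
      (k = Fin.last n → s = 1) ∧ AllRtlMaxUnbarred p := by
  simp only [AllRtlMaxUnbarred, signedInsertZero, Fin.forall_iff_succAbove k,
    isRtlMax_insertZero_self, isRtlMax_insertZero_succAbove, Fin.insertNth_apply_same,
    Fin.insertNth_apply_succAbove]

lemma card_position_sign_unbarred_at_last :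
    Fintype.card {x : Fin (n + 1) × ℤˣ // x.1 = Fin.last n → x.2 = 1} = 2 * n + 1 := by
  have hne : ∀ x : Fin (n + 1) × ℤˣ, (x.1 = Fin.last n → x.2 = 1) ↔ x ≠ (Fin.last n, -1) := by
    rintro ⟨k, s⟩
    rcases Int.units_eq_one_or s with rfl | rfl <;> simp
  rw [Fintype.card_congr (Equiv.subtypeEquivRight hne), Fintype.card_subtype_compl,
    Fintype.card_subtype_eq, Fintype.card_prod, Fintype.card_fin, Fintype.card_units_int]
  omega

lemma card_allRtlMaxUnbarred_succ :
    Fintype.card {p : Perm (Fin (n + 1)) × (Fin (n + 1) → ℤˣ) // AllRtlMaxUnbarred p} =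
      (2 * n + 1) * Fintype.card {p : Perm (Fin n) × (Fin n → ℤˣ) // AllRtlMaxUnbarred p} := by
  rw [← card_position_sign_unbarred_at_last, ← Fintype.card_prod]
  refine Fintype.card_congr (Equiv.subtypeProdEquivProd.symm.trans ?_).symm
  exact (Equiv.ofBijective _ signedInsertZero_bijective).subtypeEquiv fun x =>
    allRtlMaxUnbarred_signedInsertZero.symm

lemma card_allRtlMaxUnbarred (n : ℕ) :
    Fintype.card {p : Perm (Fin n) × (Fin n → ℤˣ) // AllRtlMaxUnbarred p} =
      ∏ k ∈ range n, (2 * k + 1) := by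
  induction n with
  | zero =>
    rw [Fintype.card_subtype, filter_true_of_mem fun _ _ i => i.elim0]
    simp
  | succ n ih => rw [card_allRtlMaxUnbarred_succ, ih, prod_range_succ, mul_comm]

end SignedPerm

/-- The number of signed permutations `(ω,ε)` of `[n]` (with `ε i ∈ {±1}`, viewed
as units of `ℤ`) all of whose right-to-left maxima are unbarred (`ε i = 1`
whenever `ω i > ω j` for all `j > i`) equals `1·3·5⋯(2n-1) = (2n)!/(2ⁿ n!)`. -/
theorem card_signed_perms_rtl_max_unbarred (n : ℕ) :
    ((Finset.univ : Finset (Equiv.Perm (Fin n) × (Fin n → ℤˣ))).filter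
        (fun p => ∀ i : Fin n, (∀ j : Fin n, i < j → p.1 j < p.1 i) → p.2 i = 1)).card
      = ∏ k ∈ Finset.range n, (2 * k + 1) ∧
    ((Finset.univ : Finset (Equiv.Perm (Fin n) × (Fin n → ℤˣ))).filter
        (fun p => ∀ i : Fin n, (∀ j : Fin n, i < j → p.1 j < p.1 i) → p.2 i = 1)).card
        * (2 ^ n * n.factorial) = (2 * n).factorial := by
  have hcard := SignedPerm.card_allRtlMaxUnbarred n
  rw [Fintype.card_subtype] at hcard
  exact ⟨hcard, hcard ▸ prod_range_two_mul_add_one_mul_two_pow_mul_factorial n⟩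
end

section
/- The number of signed permutations (ω,ε) of [n] with an even number of bars (i.e., ∏ε_i = 1), such that ω(1) ≠ n and all right-to-left maxima of (ω,ε) are unbarred, equals 1·3·5⋯(2n−3)·(n−1). -/
/-!
Flipping the sign of the first entry is an involution that preserves both conditions (as
`ω(1) ≠ n`, the first position is not a right-to-left maximum) and changes the parity of the
number of bars, so it suffices to count all signed permutations satisfying them and halve.

The Lehmer code `cᵢ = #{j > i | ω(i) < ω(j)}` identifies permutations with free choices
`cᵢ ∈ [0, n - i]`; position `i` is a right-to-left maximum iff `cᵢ = 0`, and `ω(1) = n` iff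
`c₁ = 0`. Hence the pairs `(cᵢ, εᵢ)` are chosen independently: `2(n - 1)` choices at `i = 1`,
and all `2(n - i + 1)` pairs except `(0, barred)` at `i > 1`, giving `2(n - 1)·(2n - 3)⋯3·1`.
-/

open Finset Function Equiv

theorem Finset.card_filter_lt_lt_card_filter_lt {β : Type*} [Preorder β] [DecidableLT β]
    {s : Finset β} {a b : β} (hab : a < b) (hb : b ∈ s) :
    #{x ∈ s | b < x} < #{x ∈ s | a < x} := by
  refine card_lt_card ((ssubset_iff_of_subset ?_).2 ⟨b, ?_, ?_⟩)
  · exact monotone_filter_right s fun _ _ hx => hab.trans hx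
  · simpa using ⟨hb, hab⟩
  · simp

theorem Fin.prod_univ_sub_eq_factorial (n : ℕ) : ∏ i : Fin n, (n - i : ℕ) = n.factorial := by
  rw [Fin.prod_univ_eq_prod_range (fun k => n - k), ← Nat.descFactorial_eq_prod_range,
    Nat.descFactorial_self]

namespace Equiv.Perm

variable {α : Type*} [LinearOrder α] [Fintype α]

def lehmerCode (ω : Perm α) (i : α) : ℕ := #{j | i < j ∧ ω i < ω j}

theorem lehmerCode_eq_zero_iff (ω : Perm α) (i : α) :
    lehmerCode ω i = 0 ↔ ∀ j, i < j → ω j < ω i := by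
  simp only [lehmerCode, card_eq_zero, filter_eq_empty_iff, mem_univ, true_implies, not_and,
    not_lt]
  refine forall_congr' fun j => imp_congr_right fun hij => ?_
  exact le_iff_lt_or_eq.trans (or_iff_left (ω.injective.ne hij.ne'))

theorem lehmerCode_eq_card_unused (ω : Perm α) (i : α) :
    lehmerCode ω i = #{x ∈ (({k | k < i} : Finset α).image ω)ᶜ | ω i < x} := by
  have hunused : (({k | k < i} : Finset α).image ω)ᶜ = ({j | i ≤ j} : Finset α).image ω := by
    ext x
    obtain ⟨j, rfl⟩ := ω.surjective x
    simp [ω.injective.eq_iff]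
  rw [hunused, filter_image, card_image_of_injective _ ω.injective, lehmerCode, filter_filter]
  refine congrArg card (filter_congr fun j _ => ⟨fun h => ⟨h.1.le, h.2⟩, fun h => ?_⟩)
  exact ⟨h.1.lt_of_ne (by rintro rfl; exact h.2.false), h.2⟩

-- At the first position where `ω` and `ω'` differ, both values lie in the same set of unused
-- values, and the number of unused values above a given one is strictly antitone there.
theorem lehmerCode_injective : Injective (lehmerCode (α := α)) := by
  intro ω ω' h
  ext1 i
  induction i using WellFoundedLT.induction with
  | _ i ih =>
    have hused : ({k | k < i} : Finset α).image ω = ({k | k < i} : Finset α).image ω' :=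
      image_congr fun k hk => ih k (mem_filter.1 hk).2
    have hunused : ∀ σ : Perm α, σ i ∈ (({k | k < i} : Finset α).image σ)ᶜ := fun σ => by
      simp [σ.injective.eq_iff]
    have hcode := congrFun h i
    rw [lehmerCode_eq_card_unused, lehmerCode_eq_card_unused, hused] at hcode
    rcases lt_trichotomy (ω i) (ω' i) with hlt | heq | hgt
    · exact absurd hcode (card_filter_lt_lt_card_filter_lt hlt (hunused ω')).ne'
    · exact heq
    · exact absurd hcode (card_filter_lt_lt_card_filter_lt hgt (hused ▸ hunused ω)).ne

theorem lehmerCode_bot_eq_zero_iff [OrderBot α] [OrderTop α] (ω : Perm α) :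
    lehmerCode ω ⊥ = 0 ↔ ω ⊥ = ⊤ := by
  rw [lehmerCode_eq_zero_iff]
  constructor
  · intro hmax
    by_contra hne
    have hbot : ⊥ < ω.symm ⊤ := bot_lt_iff_ne_bot.2 fun h => hne (by rw [← h, apply_symm_apply])
    exact (hmax _ hbot).not_ge (by simp)
  · intro htop j hj
    rw [htop]
    exact lt_top_iff_ne_top.2 (htop ▸ ω.injective.ne hj.ne')

section Fin

variable {n : ℕ}

theorem lehmerCode_lt (ω : Perm (Fin n)) (i : Fin n) : lehmerCode ω i < n - i := by
  have hle : lehmerCode ω i ≤ #(Ioi i) :=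
    card_le_card fun j hj => mem_Ioi.2 (mem_filter.1 hj).2.1
  rw [Fin.card_Ioi] at hle
  omega

noncomputable def lehmerEquiv : Perm (Fin n) ≃ ((i : Fin n) → Fin (n - i)) :=
  Equiv.ofBijective (fun ω i => ⟨lehmerCode ω i, lehmerCode_lt ω i⟩) <| by
    refine (Fintype.bijective_iff_injective_and_card _).2 ⟨fun ω ω' h => ?_, ?_⟩
    · exact lehmerCode_injective (funext fun i => congrArg Fin.val (congrFun h i))
    · simp [Fintype.card_perm, Fintype.card_pi, Fin.prod_univ_sub_eq_factorial]

@[simp]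
theorem lehmerEquiv_apply_val (ω : Perm (Fin n)) (i : Fin n) :
    (lehmerEquiv ω i : ℕ) = lehmerCode ω i :=
  rfl

theorem lehmerCode_zero_eq_zero_iff (ω : Perm (Fin (n + 1))) :
    lehmerCode ω 0 = 0 ↔ ω 0 = Fin.last n := by
  rw [← bot_eq_zero, ← Fin.top_eq_last]
  exact lehmerCode_bot_eq_zero_iff ω

end Fin

end Equiv.Perm

open Equiv.Perm

theorem two_mul_card_filter_prod_eq_one {X ι : Type*} [Fintype ι]
    (s : Finset (X × (ι → ℤˣ))) (g : ι → ℤˣ) (hg : ∏ i, g i = -1)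
    (hs : ∀ p ∈ s, (p.1, g * p.2) ∈ s) :
    2 * #{p ∈ s | ∏ i, p.2 i = 1} = #s := by
  have hflip : ∀ ε : ι → ℤˣ, ∏ i, (g * ε) i = -∏ i, ε i := fun ε => by
    simp [prod_mul_distrib, hg]
  have hinv : ∀ ε : ι → ℤˣ, g * (g * ε) = ε := fun ε => by
    rw [← mul_assoc, show g * g = 1 from funext fun i => Int.units_mul_self (g i), one_mul]
  have hodd_eq_even : #{p ∈ s | ¬∏ i, p.2 i = 1} = #{p ∈ s | ∏ i, p.2 i = 1} := by
    refine card_nbij' (fun p => (p.1, g * p.2)) (fun p => (p.1, g * p.2)) ?_ ?_ ?_ ?_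
    · intro p hp
      simp only [coe_filter, Set.mem_ofPred_eq] at hp ⊢
      exact ⟨hs p hp.1, by rw [hflip, Int.units_ne_iff_eq_neg.1 hp.2, neg_neg]⟩
    · intro p hp
      simp only [coe_filter, Set.mem_ofPred_eq] at hp ⊢
      exact ⟨hs p hp.1, by rw [hflip, hp.2]; decide⟩
    · intro p _
      simp [hinv]
    · intro p _
      simp [hinv]
  rw [← card_filter_add_card_filter_not (s := s) (fun p => ∏ i, p.2 i = 1), hodd_eq_even,
    two_mul]

theorem card_filter_val_ne_zero (k : ℕ) :
    #{x : Fin k × ℤˣ | (x.1 : ℕ) ≠ 0} = 2 * (k - 1) := by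
  rcases k with _ | k
  · simp
  · rw [← univ_product_univ, filter_product_left (fun c : Fin (k + 1) => (c : ℕ) ≠ 0),
      card_product]
    simp [Fin.val_eq_zero_iff, filter_ne', mul_comm]

theorem card_filter_val_eq_zero_imp_eq_one (k : ℕ) :
    #{x : Fin k × ℤˣ | (x.1 : ℕ) = 0 → x.2 = 1} = 2 * k - 1 := by
  rcases k with _ | k
  · simp
  · have hcompl : ({x : Fin (k + 1) × ℤˣ | (x.1 : ℕ) = 0 → x.2 = 1} : Finset _) =
        {(0, -1)}ᶜ := by
      ext ⟨c, s⟩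
      rcases Int.units_eq_one_or s with rfl | rfl <;> simp [Fin.val_eq_zero_iff]
    rw [hcompl, card_compl, card_singleton, Fintype.card_prod, Fintype.card_fin,
      Fintype.card_units_int, mul_comm]

theorem prod_univ_two_mul_sub_sub_one (m : ℕ) :
    ∏ i : Fin m, (2 * (m - i) - 1) = ∏ k ∈ range m, (2 * k + 1) := by
  rw [Fin.prod_univ_eq_prod_range (fun k => 2 * (m - k) - 1), ← prod_range_reflect]
  refine prod_congr rfl fun k hk => ?_
  have := mem_range.1 hk
  omega

def rtlMaxUnbarredSignedPerms (m : ℕ) : Finset (Perm (Fin (m + 1)) × (Fin (m + 1) → ℤˣ)) :=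
  {p | p.1 0 ≠ Fin.last m ∧ ∀ i, (∀ j, i < j → p.1 j < p.1 i) → p.2 i = 1}

theorem mulSingle_mul_mem_rtlMaxUnbarredSignedPerms {m : ℕ} {p}
    (hp : p ∈ rtlMaxUnbarredSignedPerms m) :
    (p.1, Pi.mulSingle 0 (-1) * p.2) ∈ rtlMaxUnbarredSignedPerms m := by
  simp only [rtlMaxUnbarredSignedPerms, mem_filter, mem_univ, true_and] at hp ⊢
  refine ⟨hp.1, fun i hi => ?_⟩
  have hi0 : i ≠ 0 := by
    rintro rfl
    exact hp.1 ((lehmerCode_zero_eq_zero_iff p.1).1 ((lehmerCode_eq_zero_iff _ _).2 hi))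
  simp [Pi.mulSingle_eq_of_ne hi0, hp.2 i hi]

theorem card_rtlMaxUnbarredSignedPerms (m : ℕ) :
    #(rtlMaxUnbarredSignedPerms m) = 2 * ((∏ k ∈ range m, (2 * k + 1)) * m) := by
  let e := (lehmerEquiv.prodCongr (Equiv.refl _)).trans
    (arrowProdEquivProdArrow (Fin (m + 1)) (fun i => Fin (m + 1 - i)) fun _ => ℤˣ).symm
  rw [card_equiv e (t := Fintype.piFinset fun i =>
    {x | (i = 0 → (x.1 : ℕ) ≠ 0) ∧ ((x.1 : ℕ) = 0 → x.2 = 1)}) ?_]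
  · rw [Fintype.card_piFinset, Fin.prod_univ_succ]
    simp only [Fin.succ_ne_zero, false_implies, true_implies, true_and]
    rw [filter_congr fun x _ => and_iff_left_of_imp fun h h' => absurd h' h,
      card_filter_val_ne_zero]
    simp only [Fin.val_zero, Nat.sub_zero, Nat.add_sub_cancel, Fin.val_succ,
      card_filter_val_eq_zero_imp_eq_one, Nat.add_sub_add_right, prod_univ_two_mul_sub_sub_one]
    ring
  · rintro ⟨ω, ε⟩
    simp only [rtlMaxUnbarredSignedPerms, mem_filter, mem_univ, true_and, Fintype.mem_piFinset,
      e, Equiv.trans_apply, prodCongr_apply, Prod.map_apply, Equiv.refl_apply,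
      arrowProdEquivProdArrow_symm_apply, lehmerEquiv_apply_val, forall_and, forall_eq,
      ← lehmerCode_eq_zero_iff]
    rw [ne_eq, ne_eq, lehmerCode_zero_eq_zero_iff]

/-- The number of even-signed permutations `(ω,ε) ∈ D_n` (i.e. `∏ εᵢ = 1`) with
`ω(1) ≠ n` and all right-to-left maxima unbarred equals
`1·3·5⋯(2n-3)·(n-1)`. -/
theorem card_typeD_perms_rtl_max_unbarred {n : ℕ} (hn : 2 ≤ n) :
    ((Finset.univ : Finset (Equiv.Perm (Fin n) × (Fin n → ℤˣ))).filter
        (fun p => (∏ i, p.2 i) = 1 ∧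
          p.1 ⟨0, by omega⟩ ≠ ⟨n - 1, by omega⟩ ∧
          ∀ i : Fin n, (∀ j : Fin n, i < j → p.1 j < p.1 i) → p.2 i = 1)).card
      = (∏ k ∈ Finset.range (n - 1), (2 * k + 1)) * (n - 1) := by
  obtain ⟨m, rfl⟩ : ∃ m, n = m + 1 := ⟨n - 1, by omega⟩
  refine Nat.eq_of_mul_eq_mul_left two_pos ?_
  calc _ = 2 * #{p ∈ rtlMaxUnbarredSignedPerms m | ∏ i, p.2 i = 1} := by
        congr 2
        ext p
        simp only [rtlMaxUnbarredSignedPerms, mem_filter, mem_univ, true_and]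
        exact and_comm
    _ = #(rtlMaxUnbarredSignedPerms m) :=
        two_mul_card_filter_prod_eq_one _ _ (by simp) fun _ =>
          mulSingle_mul_mem_rtlMaxUnbarredSignedPerms
    _ = _ := card_rtlMaxUnbarredSignedPerms m
end

section
/- Let v = (1,2,4,…,2^{n-1}). Suppose (ω,ε) is a signed permutation of [n] having a right-to-left maximum at position m with ε_m = −1 (barred). Define y ∈ ℝ^n by y_{ω(i)} = 0 for i < m and y_{ω(i)} = ε_i for i ≥ m. Then ⟨v, y⟩ ≤ −1. -/
open Finset

/-- Let `v = (1,2,4,…,2^{n-1})` and let `(ω,ε)` be a signed permutation of `[n]`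
having a barred right-to-left maximum at position `m` (`ε m = -1` and
`ω(m) > ω(j)` for all `j > m`).  Define `y` by `y_{ω(i)} = 0` for `i < m` and
`y_{ω(i)} = ε i` for `i ≥ m`.  Then `⟨v, y⟩ ≤ -1`. -/
theorem dot_le_neg_one_of_barred_rtl_max {n : ℕ}
    (ω : Equiv.Perm (Fin n)) (ε : Fin n → ℝ) (hε : ∀ i, ε i = 1 ∨ ε i = -1)
    (m : Fin n) (hmax : ∀ j : Fin n, m < j → ω j < ω m) (hbar : ε m = -1)
    (v : Fin n → ℝ) (hv : v = fun i : Fin n => 2 ^ (i : ℕ))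
    (y : Fin n → ℝ)
    (hy : y = fun k : Fin n => if ω.symm k < m then 0 else ε (ω.symm k)) :
    ∑ i, v i * y i ≤ -1 := by
  subst hv hy
  have reindex : ∑ i : Fin n, ((2:ℝ)^(i:ℕ)) * (if ω.symm i < m then 0 else ε (ω.symm i))
      = ∑ i : Fin n, ((2:ℝ)^((ω i : Fin n):ℕ)) * (if i < m then 0 else ε i) := by
    rw [← Equiv.sum_comp ω (fun i => ((2:ℝ)^(i:ℕ)) * (if ω.symm i < m then 0 else ε (ω.symm i)))]
    simp
  simp only []
  rw [reindex]
  have step1 : ∑ i : Fin n, ((2:ℝ)^((ω i : Fin n):ℕ)) * (if i < m then 0 else ε i)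
      = ∑ i ∈ univ.filter (fun i => ¬ i < m), ((2:ℝ)^((ω i : Fin n):ℕ)) * ε i := by
    rw [Finset.sum_filter]
    apply Finset.sum_congr rfl
    intro i _
    by_cases h : i < m <;> simp [h]
  rw [step1]
  have hmem : m ∈ univ.filter (fun i => ¬ i < m) := by simp
  rw [← Finset.add_sum_erase _ _ hmem, hbar]
  have herase : (univ.filter (fun i => ¬ i < m)).erase m = univ.filter (fun i => m < i) := by
    ext i
    simp only [Finset.mem_erase, Finset.mem_filter, Finset.mem_univ, true_and, not_lt]
    constructor
    · rintro ⟨hne, hle⟩; exact lt_of_le_of_ne hle (Ne.symm hne)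
    · intro h; exact ⟨ne_of_gt h, le_of_lt h⟩
  rw [herase]
  have hb1 : ∑ i ∈ univ.filter (fun i => m < i), ((2:ℝ)^((ω i : Fin n):ℕ)) * ε i
      ≤ ∑ i ∈ univ.filter (fun i => m < i), ((2:ℝ)^((ω i : Fin n):ℕ)) := by
    apply Finset.sum_le_sum
    intro i _
    rcases hε i with h | h <;> rw [h]
    · simp
    · nlinarith [pow_pos (by norm_num : (0:ℝ) < 2) ((ω i : Fin n):ℕ)]
  have hb2 : ∑ i ∈ univ.filter (fun i => m < i), ((2:ℝ)^((ω i : Fin n):ℕ))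
      ≤ (2:ℝ)^((ω m : Fin n):ℕ) - 1 := by
    have himg : ∑ i ∈ univ.filter (fun i => m < i), ((2:ℝ)^((ω i : Fin n):ℕ))
        = ∑ k ∈ (univ.filter (fun i => m < i)).image (fun i => ((ω i : Fin n):ℕ)), (2:ℝ)^k := by
      rw [Finset.sum_image]
      intro a _ b _ hab
      exact ω.injective (Fin.val_injective hab)
    rw [himg]
    have hsub : (univ.filter (fun i => m < i)).image (fun i => ((ω i : Fin n):ℕ))
        ⊆ Finset.range ((ω m : Fin n):ℕ) := by
      intro k hk
      simp only [Finset.mem_image, Finset.mem_filter, Finset.mem_univ, true_and] at hk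
      obtain ⟨i, hi, rfl⟩ := hk
      exact Finset.mem_range.mpr (hmax i hi)
    calc _ ≤ ∑ k ∈ Finset.range ((ω m : Fin n):ℕ), (2:ℝ)^k := by
              apply Finset.sum_le_sum_of_subset_of_nonneg hsub
              intro k _ _; positivity
      _ = (2:ℝ)^((ω m : Fin n):ℕ) - 1 := by
              rw [geom_sum_eq (by norm_num : (2:ℝ) ≠ 1)]
              ring
  linarith
end
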